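/- Let $0 < \varepsilon \leq 1$ and let $\gamma_1, \ldots, \gamma_k : B_0(\varepsilon) \to \mathbb{C}^d$ be injective holomorphic maps with holomorphic inverses such that $\|\gamma_i^{\pm 1} - \mathrm{id}\|_{C^0(B_0(\varepsilon))} \leq \varepsilon/32$ for all $i$. Define $S^{(0)}$ to be the set of the $\gamma_i$ and their inverses, and inductively $S^{(n+1)} = [S^{(n)}, S^{(n)}]$ (mutual commutators, omitting trivial ones). Then for every $n \geq 0$ and every $\gamma \in S^{(n)}$, the domain of $\gamma$ contains the ball $B_0(\varepsilon/2)$ and $\|\gamma - \mathrm{id}\|_{C^0(B_0(\varepsilon/2))} \leq \frac{\varepsilon}{2^n \cdot 32}$. -/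

import Mathlib

/-!
Say that `e` is `δ`-near the identity on `B₀(r)` if it is defined and holomorphic there with
`‖e - id‖ ≤ δ`. By the Cauchy estimate, a holomorphic map bounded by `δ` on `B₀(r)` is
`(δ / τ)`-Lipschitz on `B₀(r - τ)`. Writing `[a, b] z - z` as an increment of `a - id` minus an
increment of `b - id`, each taken between points at distance `≤ δ`, gives the commutator
estimate `2δ² / τ` on `B₀(r - 4δ - τ)`. With `τ = 4δ` every commutator step halves `δ` at the
cost of `8δ` in the radius, and `8δ (1 + 1/2 + 1/4 + ⋯) = 16δ = ε / 2` for `δ = ε / 32`.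
-/

open Metric

/-- Formal iterated commutators: elements of `IterComm k n` are the elements of the
`n`-th "derived set" `S⁽ⁿ⁾` built from `k` generators and their inverses (`S⁽⁰⁾`),
with `S⁽ⁿ⁺¹⁾ = [S⁽ⁿ⁾, S⁽ⁿ⁾]`. -/
inductive IterComm (k : ℕ) : ℕ → Type
  | base : Fin k → Bool → IterComm k 0
  | comm {n : ℕ} : IterComm k n → IterComm k n → IterComm k (n + 1)

/-- Realize a formal iterated commutator as a partially defined map of `ℂ^d`,
using composition of partial bijections (so domains shrink appropriately):
`comm f g` is realized as `f ∘ g ∘ f⁻¹ ∘ g⁻¹`. -/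
noncomputable def IterComm.realize {k d n : ℕ}
    (γ : Fin k → PartialEquiv (EuclideanSpace ℂ (Fin d)) (EuclideanSpace ℂ (Fin d))) :
    IterComm k n → PartialEquiv (EuclideanSpace ℂ (Fin d)) (EuclideanSpace ℂ (Fin d))
  | .base i b => if b then γ i else (γ i).symm
  | .comm a b =>
      (b.realize γ).symm.trans (((a.realize γ).symm).trans ((b.realize γ).trans (a.realize γ)))

open Set

section CauchyEstimate

variable {E F : Type*} [NormedAddCommGroup E] [NormedSpace ℂ E]
  [NormedAddCommGroup F] [NormedSpace ℂ F]

theorem norm_fderiv_apply_le_of_forall_mem_sphere_norm_le {f : E → F} {c : E} {R C : ℝ}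
    (hR : 0 < R) (hd : DiffContOnCl ℂ f (ball c R)) (hC : ∀ z ∈ sphere c R, ‖f z‖ ≤ C) (v : E) :
    ‖fderiv ℂ f c v‖ ≤ C / R * ‖v‖ := by
  rcases eq_or_ne v 0 with rfl | hv
  · simp
  have hv' : 0 < ‖v‖ := norm_pos_iff.mpr hv
  set line : ℂ → E := fun t => c + t • v
  have hline : Differentiable ℂ line := (differentiable_id.smul_const v).const_add c
  have hmaps : MapsTo line (ball 0 (R / ‖v‖)) (ball c R) := by
    intro t ht
    simp only [mem_ball, dist_eq_norm, line, add_sub_cancel_left, norm_smul, sub_zero] at ht ⊢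
    rwa [lt_div_iff₀ hv'] at ht
  have hsphere : MapsTo line (sphere 0 (R / ‖v‖)) (sphere c R) := by
    intro t ht
    simp only [mem_sphere, dist_eq_norm, line, add_sub_cancel_left, norm_smul, sub_zero] at ht ⊢
    rw [ht, div_mul_cancel₀ _ hv'.ne']
  have hderiv : HasDerivAt (f ∘ line) (fderiv ℂ f c v) 0 := by
    have hfc := (hd.differentiableAt isOpen_ball (mem_ball_self hR)).hasFDerivAt
    have hl : HasDerivAt line v 0 := by
      simpa only [one_smul] using ((hasDerivAt_id' (0 : ℂ)).smul_const v).const_add c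
    exact hfc.comp_hasDerivAt_of_eq 0 hl (by simp [line])
  have hcauchy := Complex.norm_deriv_le_of_forall_mem_sphere_norm_le (div_pos hR hv')
    (hd.comp hline.diffContOnCl hmaps) fun t ht => hC _ (hsphere ht)
  rw [hderiv.deriv] at hcauchy
  calc _ ≤ C / (R / ‖v‖) := hcauchy
    _ = C / R * ‖v‖ := by field_simp

theorem norm_sub_le_of_forall_mem_ball_norm_le {f : E → F} {c x y : E} {r τ C : ℝ}
    (hτ : 0 < τ) (hd : DifferentiableOn ℂ f (ball c r)) (hC : ∀ z ∈ ball c r, ‖f z‖ ≤ C)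
    (hx : x ∈ ball c (r - τ)) (hy : y ∈ ball c (r - τ)) :
    ‖f y - f x‖ ≤ C / τ * ‖y - x‖ := by
  have hC0 : 0 ≤ C := (norm_nonneg _).trans (hC x (ball_subset_ball (by linarith) hx))
  have hclosed : ∀ p ∈ ball c (r - τ), closedBall p τ ⊆ ball c r := fun p hp =>
    closedBall_subset_ball' (by rw [mem_ball] at hp; linarith)
  refine (convex_ball c (r - τ)).norm_image_sub_le_of_norm_fderiv_le (𝕜 := ℂ) (fun p hp => ?_)
    (fun p hp => ?_) hx hy
  · exact hd.differentiableAt (isOpen_ball.mem_nhds (hclosed p hp (mem_closedBall_self hτ.le)))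
  · refine ContinuousLinearMap.opNorm_le_bound _ (by positivity) fun v => ?_
    exact norm_fderiv_apply_le_of_forall_mem_sphere_norm_le hτ
      (hd.diffContOnCl_ball (hclosed p hp)) (fun z hz => hC z (hclosed p hp
        (sphere_subset_closedBall hz))) v

end CauchyEstimate

namespace PartialEquiv

section Commutator

variable {α : Type*} (a b : PartialEquiv α α)

def commutator : PartialEquiv α α :=
  b.symm.trans (a.symm.trans (b.trans a))

theorem coe_commutator : ⇑(a.commutator b) = a ∘ b ∘ a.symm ∘ b.symm := rfl

theorem commutator_symm : (a.commutator b).symm = b.commutator a := by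
  simp only [commutator, trans_symm_eq_symm_trans_symm, symm_symm, trans_assoc]

end Commutator

variable {E : Type*} [NormedAddCommGroup E] [NormedSpace ℂ E]

structure IsNearId (e : PartialEquiv E E) (r δ : ℝ) : Prop where
  ball_subset_source : ball 0 r ⊆ e.source
  differentiableOn : DifferentiableOn ℂ e (ball 0 r)
  norm_sub_le : ∀ z ∈ ball 0 r, ‖e z - z‖ ≤ δ

namespace IsNearId

variable {e a b : PartialEquiv E E} {r r' s δ δ' τ : ℝ}

theorem mono (h : e.IsNearId r δ) (hr : r' ≤ r) (hδ : δ ≤ δ') : e.IsNearId r' δ' where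
  ball_subset_source := (ball_subset_ball hr).trans h.ball_subset_source
  differentiableOn := h.differentiableOn.mono (ball_subset_ball hr)
  norm_sub_le z hz := (h.norm_sub_le z (ball_subset_ball hr hz)).trans hδ

theorem mapsTo_ball (h : e.IsNearId r δ) (hs : s ≤ r) : MapsTo e (ball 0 s) (ball 0 (s + δ)) := by
  intro z hz
  have hez := h.norm_sub_le z (ball_subset_ball hs hz)
  rw [mem_ball_zero_iff] at hz ⊢
  calc ‖e z‖ ≤ ‖e z - z‖ + ‖z‖ := norm_le_norm_sub_add _ _
    _ < δ + s := add_lt_add_of_le_of_lt hez hz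
    _ = s + δ := add_comm _ _

theorem commutator (ha : a.IsNearId r δ) (ha' : a.symm.IsNearId r δ) (hb : b.IsNearId r δ)
    (hb' : b.symm.IsNearId r δ) (hδ : 0 ≤ δ) (hτ : 0 < τ) :
    (a.commutator b).IsNearId (r - 4 * δ - τ) (2 * δ ^ 2 / τ) := by
  set s := r - 4 * δ - τ
  have m₁ : MapsTo b.symm (ball 0 s) (ball 0 (s + δ)) := hb'.mapsTo_ball (by linarith)
  have m₂ : MapsTo a.symm (ball 0 (s + δ)) (ball 0 (s + δ + δ)) := ha'.mapsTo_ball (by linarith)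
  have m₃ : MapsTo b (ball 0 (s + δ + δ)) (ball 0 (s + δ + δ + δ)) := hb.mapsTo_ball (by linarith)
  have hball : ∀ t ≤ r, ball (0 : E) t ⊆ ball 0 r := fun t ht => ball_subset_ball ht
  refine ⟨fun z hz => ?_, ?_, fun z hz => ?_⟩
  · simp only [PartialEquiv.commutator, trans_source, mem_inter_iff, mem_preimage]
    exact ⟨hb'.ball_subset_source (hball s (by linarith) hz),
      ha'.ball_subset_source (hball _ (by linarith) (m₁ hz)),
      hb.ball_subset_source (hball _ (by linarith) (m₂ (m₁ hz))),
      ha.ball_subset_source (hball _ (by linarith) (m₃ (m₂ (m₁ hz))))⟩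
  · rw [coe_commutator]
    exact (ha.differentiableOn.mono (hball _ (by linarith))).comp
      ((hb.differentiableOn.mono (hball _ (by linarith))).comp
        ((ha'.differentiableOn.mono (hball _ (by linarith))).comp
          (hb'.differentiableOn.mono (hball _ (by linarith))) m₁) (m₂.comp m₁))
      (m₃.comp (m₂.comp m₁))
  · set z₁ := b.symm z
    set w := a.symm z₁
    set u := b w
    have hz₁ : z₁ ∈ ball 0 (s + δ) := m₁ hz
    have hw : w ∈ ball 0 (s + δ + δ) := m₂ hz₁
    have hu : u ∈ ball 0 (s + δ + δ + δ) := m₃ hw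
    have haw : a w = z₁ := a.right_inv (ha'.ball_subset_source (hball _ (by linarith) hz₁))
    have hbz₁ : b z₁ = z := b.right_inv (hb'.ball_subset_source (hball _ (by linarith) hz))
    have hφ := norm_sub_le_of_forall_mem_ball_norm_le hτ
      (ha.differentiableOn.sub differentiableOn_id) ha.norm_sub_le
      (ball_subset_ball (by linarith) hw) (ball_subset_ball (by linarith) hu)
    have hψ := norm_sub_le_of_forall_mem_ball_norm_le hτ
      (hb.differentiableOn.sub differentiableOn_id) hb.norm_sub_le
      (ball_subset_ball (by linarith) hw) (ball_subset_ball (by linarith) hz₁)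
    have huw : ‖u - w‖ ≤ δ := hb.norm_sub_le w (hball _ (by linarith) hw)
    have hz₁w : ‖z₁ - w‖ ≤ δ := by
      rw [norm_sub_rev]; exact ha'.norm_sub_le z₁ (hball _ (by linarith) hz₁)
    calc ‖a.commutator b z - z‖
        = ‖((a u - u) - (a w - w)) - ((b z₁ - z₁) - (b w - w))‖ := by
          rw [show a.commutator b z = a u from rfl, haw, hbz₁]; congr 1; abel
      _ ≤ ‖(a u - u) - (a w - w)‖ + ‖(b z₁ - z₁) - (b w - w)‖ := _root_.norm_sub_le _ _
      _ ≤ δ / τ * δ + δ / τ * δ := by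
          gcongr
          · exact hφ.trans (by gcongr)
          · exact hψ.trans (by gcongr)
      _ = 2 * δ ^ 2 / τ := by ring

theorem commutator_half (ha : a.IsNearId r δ) (ha' : a.symm.IsNearId r δ)
    (hb : b.IsNearId r δ) (hb' : b.symm.IsNearId r δ) (hδ : 0 < δ) :
    (a.commutator b).IsNearId (r - 8 * δ) (δ / 2) :=
  (ha.commutator ha' hb hb' hδ.le (by positivity : 0 < 4 * δ)).mono (by linarith)
    (le_of_eq (by field_simp; ring))

end IsNearId

end PartialEquiv

namespace IterComm

variable {k d : ℕ} {γ : Fin k → PartialEquiv (EuclideanSpace ℂ (Fin d)) (EuclideanSpace ℂ (Fin d))}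
  {r δ : ℝ}

theorem realize_comm {n : ℕ} (a b : IterComm k n) :
    (comm a b).realize γ = (a.realize γ).commutator (b.realize γ) := rfl

theorem isNearId_realize (hδ : 0 < δ) (hγ : ∀ i, (γ i).IsNearId r δ)
    (hγsymm : ∀ i, (γ i).symm.IsNearId r δ) :
    ∀ {n : ℕ} (w : IterComm k n),
      (w.realize γ).IsNearId (r - 16 * δ + 16 * δ / 2 ^ n) (δ / 2 ^ n) ∧
      (w.realize γ).symm.IsNearId (r - 16 * δ + 16 * δ / 2 ^ n) (δ / 2 ^ n)
  | _, base i true => by simpa [realize] using ⟨hγ i, hγsymm i⟩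
  | _, base i false => by simpa [realize] using ⟨hγsymm i, hγ i⟩
  | _, comm (n := n) a b => by
    obtain ⟨ha, ha'⟩ := isNearId_realize hδ hγ hγsymm a
    obtain ⟨hb, hb'⟩ := isNearId_realize hδ hγ hγsymm b
    have hδn : 0 < δ / 2 ^ n := by positivity
    have hr : r - 16 * δ + 16 * δ / 2 ^ (n + 1) =
        r - 16 * δ + 16 * δ / 2 ^ n - 8 * (δ / 2 ^ n) := by
      rw [pow_succ]; ring
    have hδ' : δ / 2 ^ (n + 1) = δ / 2 ^ n / 2 := by rw [pow_succ]; ring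
    rw [realize_comm, PartialEquiv.commutator_symm, hr, hδ']
    exact ⟨ha.commutator_half ha' hb hb' hδn, hb.commutator_half hb' ha ha' hδn⟩

end IterComm

theorem stmt_7_general {k d : ℕ} (ε : ℝ) (hε0 : 0 < ε)
    (γ : Fin k → PartialEquiv (EuclideanSpace ℂ (Fin d)) (EuclideanSpace ℂ (Fin d)))
    (hsource : ∀ i, (γ i).source = ball 0 ε)
    (htarget : ∀ i, ball (0 : EuclideanSpace ℂ (Fin d)) ε ⊆ (γ i).target)
    (hhol : ∀ i, DifferentiableOn ℂ (γ i) (ball 0 ε))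
    (hholinv : ∀ i, DifferentiableOn ℂ (γ i).symm (γ i).target)
    (hclose : ∀ i, ∀ z ∈ ball (0 : EuclideanSpace ℂ (Fin d)) ε, ‖γ i z - z‖ ≤ ε / 32)
    (hcloseinv : ∀ i, ∀ z ∈ ball (0 : EuclideanSpace ℂ (Fin d)) ε,
      ‖(γ i).symm z - z‖ ≤ ε / 32) :
    ∀ (n : ℕ) (w : IterComm k n),
      ball (0 : EuclideanSpace ℂ (Fin d)) (ε / 2) ⊆ (w.realize γ).source ∧
      ∀ z ∈ ball (0 : EuclideanSpace ℂ (Fin d)) (ε / 2),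
        ‖w.realize γ z - z‖ ≤ ε / (2 ^ n * 32) := by
  intro n w
  have hγ : ∀ i, (γ i).IsNearId ε (ε / 32) := fun i =>
    ⟨(hsource i).symm.subset, hhol i, hclose i⟩
  have hγsymm : ∀ i, (γ i).symm.IsNearId ε (ε / 32) := fun i =>
    ⟨htarget i, (hholinv i).mono (htarget i), hcloseinv i⟩
  have hmargin : 0 ≤ 16 * (ε / 32) / 2 ^ n := by positivity
  have hw := (IterComm.isNearId_realize (by positivity) hγ hγsymm w).1.mono
    (r' := ε / 2) (δ' := ε / (2 ^ n * 32)) (by linarith) (le_of_eq (by ring))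
  exact ⟨hw.ball_subset_source, hw.norm_sub_le⟩

/-- Common domain of definition: if the `k` injective holomorphic "seed" maps `γᵢ` and
their inverses are `ε/32`-close to the identity on `B_0(ε) ⊂ ℂ^d`, then every iterated
commutator `γ ∈ S⁽ⁿ⁾` is defined on `B_0(ε/2)` and satisfies
`‖γ - id‖_{C⁰(B_0(ε/2))} ≤ ε/(2ⁿ · 32)`. -/
theorem stmt_7 {k d : ℕ} (ε : ℝ) (hε0 : 0 < ε) (hε1 : ε ≤ 1)
    (γ : Fin k → PartialEquiv (EuclideanSpace ℂ (Fin d)) (EuclideanSpace ℂ (Fin d)))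
    (hsource : ∀ i, (γ i).source = ball 0 ε)
    (htarget : ∀ i, ball (0 : EuclideanSpace ℂ (Fin d)) ε ⊆ (γ i).target)
    (hhol : ∀ i, DifferentiableOn ℂ (γ i) (ball 0 ε))
    (hholinv : ∀ i, DifferentiableOn ℂ (γ i).symm (γ i).target)
    (hclose : ∀ i, ∀ z ∈ ball (0 : EuclideanSpace ℂ (Fin d)) ε, ‖γ i z - z‖ ≤ ε / 32)
    (hcloseinv : ∀ i, ∀ z ∈ ball (0 : EuclideanSpace ℂ (Fin d)) ε,
      ‖(γ i).symm z - z‖ ≤ ε / 32) :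
    ∀ (n : ℕ) (w : IterComm k n),
      ball (0 : EuclideanSpace ℂ (Fin d)) (ε / 2) ⊆ (w.realize γ).source ∧
      ∀ z ∈ ball (0 : EuclideanSpace ℂ (Fin d)) (ε / 2),
        ‖w.realize γ z - z‖ ≤ ε / (2 ^ n * 32) :=
  stmt_7_general ε hε0 γ hsource htarget hhol hholinv hclose hcloseinv
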